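/- Theorem (nonnegative case): Let 𝒜 ⊆ M(N,M) and ℬ ⊆ M(M,N) be finite sets of matrices with all entries nonnegative and with no zero rows (every row of every matrix in 𝒜 ∪ ℬ has positive sum). Suppose every sequence (A_n) ∈ 𝒜^∞ is ℬ-right-bounded. Then there exists a universal constant C > 0 such that for every sequence (A_n) ∈ 𝒜^∞ there is a sequence (B_n) ∈ ℬ^∞ with ‖A_n B_n ⋯ A_1 B_1‖ ≤ C for all n ≥ 1. -/

import Mathlib

/-!
If every row sum of `P` is at least `c`, then `‖Q * P‖ ≥ c * ‖Q‖` for every nonnegative `Q`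
(in the max-row-sum norm). By finiteness some `c > 0` bounds the row sums of all products
`A * B` with `A ∈ 𝒜`, `B ∈ ℬ` from below, so a prefix of length `T` of any product has row sums
at least `c ^ T`, and it scales the norm of whatever follows it by at least that factor.

Hence a uniform bound over finite horizons exists: otherwise, concatenate sequences from `𝒜`
whose blocks defeat ever larger thresholds `j / c ^ T_j`, `T_j` being the start of block `j`;
every choice of `(B_n)` then makes the product of the concatenation exceed every `j`,
contradicting `ℬ`-right-boundedness. Finally, a bound valid on every finite horizon extends to
an infinite sequence `(B_n)` by compactness of `ℕ → ℬ` (König's lemma).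
-/

attribute [local instance] Matrix.linftyOpNormedAddCommGroup Matrix.linftyOpNormedRing

/-- `prodAB A B n = (A n * B n) * ⋯ * (A 1 * B 1)`, with `prodAB A B 0 = 1`. -/
def prodAB {N M : ℕ} (A : ℕ → Matrix (Fin N) (Fin M) ℝ)
    (B : ℕ → Matrix (Fin M) (Fin N) ℝ) : ℕ → Matrix (Fin N) (Fin N) ℝ
  | 0 => 1
  | n + 1 => A (n + 1) * B (n + 1) * prodAB A B n

open Matrix

section RowSums

variable {l m n : Type*} [Fintype m] [Fintype n]

def NonnegRowSumsGE (c : ℝ) (X : Matrix m n ℝ) : Prop :=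
  (∀ i j, 0 ≤ X i j) ∧ ∀ i, c ≤ ∑ j, X i j

theorem nonnegRowSumsGE_one [DecidableEq n] : NonnegRowSumsGE 1 (1 : Matrix n n ℝ) :=
  ⟨fun i j => by rw [one_apply]; split_ifs <;> norm_num, fun i => by simp [one_apply]⟩

theorem sum_mul_apply (X : Matrix l m ℝ) (Y : Matrix m n ℝ) (i : l) :
    ∑ j, (X * Y) i j = ∑ k, X i k * ∑ j, Y k j := by
  simp only [mul_apply, Finset.mul_sum]
  exact Finset.sum_comm

theorem sum_apply_mul_le_sum_mul_apply {c : ℝ} {X : Matrix l m ℝ} {Y : Matrix m n ℝ}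
    (hX : ∀ i k, 0 ≤ X i k) (hY : ∀ k, c ≤ ∑ j, Y k j) (i : l) :
    (∑ k, X i k) * c ≤ ∑ j, (X * Y) i j := by
  rw [sum_mul_apply, Finset.sum_mul]
  gcongr with k
  exacts [hX i k, hY k]

theorem NonnegRowSumsGE.mul {a b : ℝ} {X : Matrix l m ℝ} {Y : Matrix m n ℝ}
    (hX : NonnegRowSumsGE a X) (hY : NonnegRowSumsGE b Y) (hb : 0 ≤ b) :
    NonnegRowSumsGE (a * b) (X * Y) := by
  refine ⟨fun i j => Finset.sum_nonneg fun k _ => mul_nonneg (hX.1 i k) (hY.1 k j), fun i => ?_⟩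
  calc a * b ≤ (∑ k, X i k) * b := mul_le_mul_of_nonneg_right (hX.2 i) hb
    _ ≤ ∑ j, (X * Y) i j := sum_apply_mul_le_sum_mul_apply hX.1 hY.2 i

theorem exists_pos_nonnegRowSumsGE [Fintype l] {S : Set (Matrix l m ℝ)} (hS : S.Finite)
    (hnn : ∀ X ∈ S, ∀ i j, 0 ≤ X i j) (hrow : ∀ X ∈ S, ∀ i, 0 < ∑ j, X i j) :
    ∃ δ, 0 < δ ∧ ∀ X ∈ S, NonnegRowSumsGE δ X := by
  obtain ⟨δ, hδ, hδS⟩ := Set.Finite.exists_between' (Set.finite_singleton 0)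
    ((hS.prod Set.finite_univ).image fun p : Matrix l m ℝ × l => ∑ j, p.1 p.2 j)
    (by rintro _ rfl _ ⟨⟨X, i⟩, ⟨hX, -⟩, rfl⟩; exact hrow X hX i)
  exact ⟨δ, hδ 0 rfl, fun X hX => ⟨hnn X hX, fun i => (hδS _ ⟨(X, i), ⟨hX, trivial⟩, rfl⟩).le⟩⟩

theorem sum_apply_le_norm (X : Matrix m n ℝ) (i : m) : ∑ j, X i j ≤ ‖X‖ :=
  calc ∑ j, X i j ≤ ∑ j, ‖X i j‖ := Finset.sum_le_sum fun _ _ => Real.le_norm_self _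
    _ = ‖WithLp.toLp 1 (X i)‖ := (PiLp.norm_eq_of_L1 (WithLp.toLp 1 (X i))).symm
    _ ≤ ‖X‖ := norm_le_pi_norm (fun i => WithLp.toLp 1 (X i)) i

theorem norm_mul_le_norm_mul_of_le_sum {c : ℝ} {Q : Matrix l m ℝ} {P : Matrix m n ℝ} [Fintype l]
    (hQ : ∀ i k, 0 ≤ Q i k) (hP : ∀ k, c ≤ ∑ j, P k j) :
    ‖Q‖ * c ≤ ‖Q * P‖ := by
  rcases isEmpty_or_nonempty l with hl | hl
  · simp [Subsingleton.elim Q 0]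
  obtain ⟨i, -, hi⟩ := Finset.exists_mem_eq_sup Finset.univ Finset.univ_nonempty
    fun i => ∑ k, ‖Q i k‖₊
  have hQi : ‖Q‖ = ∑ k, Q i k := by
    rw [linfty_opNorm_def, hi, NNReal.coe_sum]
    exact Finset.sum_congr rfl fun k _ => abs_of_nonneg (hQ i k)
  calc ‖Q‖ * c = (∑ k, Q i k) * c := by rw [hQi]
    _ ≤ ∑ j, (Q * P) i j := sum_apply_mul_le_sum_mul_apply hQ hP i
    _ ≤ ‖Q * P‖ := sum_apply_le_norm _ i

end RowSums

section Products

variable {N M : ℕ}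

theorem prodAB_add (A : ℕ → Matrix (Fin N) (Fin M) ℝ) (B : ℕ → Matrix (Fin M) (Fin N) ℝ)
    (s k : ℕ) :
    prodAB A B (s + k) = prodAB (fun t => A (s + t)) (fun t => B (s + t)) k * prodAB A B s := by
  induction k with
  | zero => simp [prodAB]
  | succ k ih =>
    rw [← Nat.add_assoc, prodAB, prodAB, ih]
    simp only [Nat.add_assoc, mul_assoc]

theorem prodAB_congr {A A' : ℕ → Matrix (Fin N) (Fin M) ℝ} {B : ℕ → Matrix (Fin M) (Fin N) ℝ}
    {n : ℕ} (hA : ∀ t, 0 < t → t ≤ n → A t = A' t) : prodAB A B n = prodAB A' B n := by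
  induction n with
  | zero => rfl
  | succ n ih =>
    simp only [prodAB, hA (n + 1) n.succ_pos le_rfl,
      ih fun t ht htn => hA t ht (htn.trans n.le_succ)]

theorem nonnegRowSumsGE_prodAB {c : ℝ} {A : ℕ → Matrix (Fin N) (Fin M) ℝ}
    {B : ℕ → Matrix (Fin M) (Fin N) ℝ} (hAB : ∀ t, NonnegRowSumsGE c (A t * B t)) (hc : 0 ≤ c)
    (n : ℕ) : NonnegRowSumsGE (c ^ n) (prodAB A B n) := by
  induction n with
  | zero => exact nonnegRowSumsGE_one
  | succ n ih => rw [pow_succ']; exact (hAB (n + 1)).mul ih (pow_nonneg hc n)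

theorem continuous_prodAB (A : ℕ → Matrix (Fin N) (Fin M) ℝ) (n : ℕ) :
    Continuous fun B : ℕ → Matrix (Fin M) (Fin N) ℝ => prodAB A B n := by
  induction n with
  | zero => exact continuous_const
  | succ n ih => exact (continuous_const.matrix_mul (continuous_apply (n + 1))).matrix_mul ih

end Products

theorem exists_seq_eq_blocks {α : Type*} {S : Set α} {T : ℕ → ℕ} (hT : StrictMono T)
    {blk : ℕ → ℕ → α} (hblk : ∀ j i, blk j i ∈ S) :
    ∃ s : ℕ → α, (∀ t, s t ∈ S) ∧ ∀ j i, 0 < i → T j + i ≤ T (j + 1) → s (T j + i) = blk j i := by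
  classical
  have hcover (t : ℕ) : ∃ j, t ≤ T (j + 1) := ⟨t, (hT.id_le t).trans (hT.monotone t.le_succ)⟩
  refine ⟨fun t => blk (Nat.find (hcover t)) (t - T (Nat.find (hcover t))),
    fun t => hblk _ _, fun j i hi hij => ?_⟩
  have hfind : Nat.find (hcover (T j + i)) = j := by
    refine (Nat.find_eq_iff _).2 ⟨hij, fun k hk hle => ?_⟩
    have : T (k + 1) ≤ T j := hT.monotone hk
    omega
  simp only [hfind, Nat.add_sub_cancel_left]

section Horizon

variable {N M : ℕ} {𝒜 : Set (Matrix (Fin N) (Fin M) ℝ)} {ℬ : Set (Matrix (Fin M) (Fin N) ℝ)}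

theorem exists_bound_up_to_horizon {c : ℝ} (hc : 0 < c)
    (h𝒜ℬ : ∀ A ∈ 𝒜, ∀ B ∈ ℬ, NonnegRowSumsGE c (A * B))
    (hbd : ∀ A : ℕ → Matrix (Fin N) (Fin M) ℝ, (∀ n, A n ∈ 𝒜) →
      ∃ B : ℕ → Matrix (Fin M) (Fin N) ℝ, (∀ n, B n ∈ ℬ) ∧
        ∃ C : ℝ, ∀ n, 1 ≤ n → ‖prodAB A B n‖ ≤ C) :
    ∃ C : ℝ, ∀ A : ℕ → Matrix (Fin N) (Fin M) ℝ, (∀ n, A n ∈ 𝒜) → ∀ n,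
      ∃ B : ℕ → Matrix (Fin M) (Fin N) ℝ, (∀ k, B k ∈ ℬ) ∧
        ∀ k, 1 ≤ k → k ≤ n → ‖prodAB A B k‖ ≤ C := by
  by_contra! hbad
  choose bad hbad𝒜 len hlen using hbad
  -- Block `j` starts after position `T j`; the prefix before it has row sums at least `c ^ T j`,
  -- so beating `j / c ^ T j` inside the block means beating `j` in the concatenation.
  let thr (j T : ℕ) : ℝ := j / c ^ T
  let T (j : ℕ) : ℕ := Nat.rec 0 (fun i Ti => Ti + len (thr i Ti) + 1) j
  have hT_succ (j : ℕ) : T (j + 1) = T j + len (thr j (T j)) + 1 := rfl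
  have hT : StrictMono T := strictMono_nat_of_lt_succ fun j => by rw [hT_succ]; omega
  obtain ⟨A, hA𝒜, hAblk⟩ := exists_seq_eq_blocks hT fun j => hbad𝒜 (thr j (T j))
  obtain ⟨B, hBℬ, Cb, hCb⟩ := hbd A hA𝒜
  obtain ⟨j, hj⟩ := exists_nat_gt Cb
  obtain ⟨k, hk, hklen, hbig⟩ := hlen (thr j (T j)) (fun t => B (T j + t)) fun t => hBℬ _
  have hblock : prodAB (fun t => A (T j + t)) (fun t => B (T j + t)) k
      = prodAB (bad (thr j (T j))) (fun t => B (T j + t)) k :=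
    prodAB_congr fun t ht htk => hAblk j t ht (by rw [hT_succ]; omega)
  have hprefix := nonnegRowSumsGE_prodAB (fun t => h𝒜ℬ _ (hA𝒜 t) _ (hBℬ t)) hc.le (T j)
  have hcT : 0 < c ^ T j := pow_pos hc _
  have : (j : ℝ) < Cb := calc
    (j : ℝ) = thr j (T j) * c ^ T j := (div_mul_cancel₀ _ hcT.ne').symm
    _ < ‖prodAB (bad (thr j (T j))) (fun t => B (T j + t)) k‖ * c ^ T j := by gcongr
    _ ≤ ‖prodAB A B (T j + k)‖ := by
      rw [prodAB_add, hblock]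
      exact norm_mul_le_norm_mul_of_le_sum
        (nonnegRowSumsGE_prodAB (fun t => h𝒜ℬ _ (hbad𝒜 _ t) _ (hBℬ _)) hc.le k).1 hprefix.2
    _ ≤ Cb := hCb _ (by omega)
  linarith

theorem exists_seq_of_bound_up_to_horizon (hℬ : ℬ.Finite) (A : ℕ → Matrix (Fin N) (Fin M) ℝ)
    {C : ℝ} (h : ∀ n, ∃ B : ℕ → Matrix (Fin M) (Fin N) ℝ, (∀ k, B k ∈ ℬ) ∧
      ∀ k, 1 ≤ k → k ≤ n → ‖prodAB A B k‖ ≤ C) :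
    ∃ B : ℕ → Matrix (Fin M) (Fin N) ℝ, (∀ k, B k ∈ ℬ) ∧ ∀ k, 1 ≤ k → ‖prodAB A B k‖ ≤ C := by
  have : CompactSpace ℬ := isCompact_iff_compactSpace.1 hℬ.isCompact
  let F (k : ℕ) : Set (ℕ → ℬ) := {b | 1 ≤ k → ‖prodAB A (fun t => b t) k‖ ≤ C}
  have hF (k : ℕ) : IsClosed (F k) := isClosed_imp isOpen_const <| isClosed_le
    ((continuous_prodAB A k).comp (continuous_pi fun t =>
      continuous_subtype_val.comp (continuous_apply t))).norm continuous_const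
  obtain ⟨b, hb⟩ := CompactSpace.iInter_nonempty hF fun u => by
    obtain ⟨B, hBℬ, hBC⟩ := h (u.sup id)
    exact ⟨fun t => ⟨B t, hBℬ t⟩, Set.mem_iInter₂.2 fun k hk hk1 =>
      hBC k hk1 (Finset.le_sup (f := id) hk)⟩
  exact ⟨fun t => b t, fun t => (b t).2, fun k hk => Set.mem_iInter.1 hb k hk⟩

end Horizon

/-- Nonnegative case: if `𝒜`, `ℬ` are finite sets of matrices with
nonnegative entries and no zero rows, and every sequence with values in
`𝒜` is `ℬ`-right-bounded, then there is a universal constant `C > 0` such that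
for every sequence `(A_n)` in `𝒜` there is a sequence `(B_n)` in `ℬ` with
`‖A_n B_n ⋯ A_1 B_1‖ ≤ C` for all `n ≥ 1`. -/
theorem stmt11 {N M : ℕ} (𝒜 : Set (Matrix (Fin N) (Fin M) ℝ))
    (ℬ : Set (Matrix (Fin M) (Fin N) ℝ)) (h𝒜 : 𝒜.Finite) (hℬ : ℬ.Finite)
    (hAnn : ∀ A ∈ 𝒜, ∀ i j, 0 ≤ A i j) (hBnn : ∀ B ∈ ℬ, ∀ i j, 0 ≤ B i j)
    (hArow : ∀ A ∈ 𝒜, ∀ i, 0 < ∑ j, A i j) (hBrow : ∀ B ∈ ℬ, ∀ i, 0 < ∑ j, B i j)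
    (hbd : ∀ A : ℕ → Matrix (Fin N) (Fin M) ℝ, (∀ n, A n ∈ 𝒜) →
      ∃ B : ℕ → Matrix (Fin M) (Fin N) ℝ, (∀ n, B n ∈ ℬ) ∧
        ∃ C : ℝ, ∀ n, 1 ≤ n → ‖prodAB A B n‖ ≤ C) :
    ∃ C : ℝ, 0 < C ∧ ∀ A : ℕ → Matrix (Fin N) (Fin M) ℝ, (∀ n, A n ∈ 𝒜) →
      ∃ B : ℕ → Matrix (Fin M) (Fin N) ℝ, (∀ n, B n ∈ ℬ) ∧
        ∀ n, 1 ≤ n → ‖prodAB A B n‖ ≤ C := by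
  obtain ⟨δ, hδ, h𝒜δ⟩ := exists_pos_nonnegRowSumsGE h𝒜 hAnn hArow
  obtain ⟨ε, hε, hℬε⟩ := exists_pos_nonnegRowSumsGE hℬ hBnn hBrow
  obtain ⟨C, hC⟩ := exists_bound_up_to_horizon (mul_pos hδ hε)
    (fun A hA B hB => (h𝒜δ A hA).mul (hℬε B hB) hε.le) hbd
  refine ⟨max C 1, by positivity, fun A hA => ?_⟩
  obtain ⟨B, hBℬ, hBC⟩ := exists_seq_of_bound_up_to_horizon hℬ A (hC A hA)
  exact ⟨B, hBℬ, fun n hn => (hBC n hn).trans (le_max_left C 1)⟩
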